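/- Let X be a Priestley space. A subset 𝒰 of CC(X) is clopen in the Vietoris topology and is an upset with respect to reverse inclusion (i.e., if C ∈ 𝒰, K ∈ CC(X) and K ⊆ C then K ∈ 𝒰) if and only if 𝒰 = □V₁ ∪ ⋯ ∪ □V_n for finitely many clopen subsets V₁, …, V_n of X (allowing n = 0, giving the empty set). -/
import Mathlib


open Set TopologicalSpace

/-- The set of nonempty closed chains of a Priestley space `X`. -/
def CC (X : Type*) [TopologicalSpace X] [Preorder X] : Set (Set X) :=
  {C | C.Nonempty ∧ IsClosed C ∧ IsChain (· ≤ ·) C}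

variable {X : Type*} [TopologicalSpace X] [Preorder X]

/-- `□A = {C ∈ CC(X) | C ⊆ A}`. -/
def ccBox (A : Set X) : Set ↥(CC X) := {C | (C : Set X) ⊆ A}

/-- `◇A = {C ∈ CC(X) | C ∩ A ≠ ∅}`. -/
def ccDia (A : Set X) : Set ↥(CC X) := {C | ((C : Set X) ∩ A).Nonempty}

/-- The Vietoris topology on `CC X`, generated by the subbasis `{□V, ◇V | V clopen}`. -/
instance ccTop : TopologicalSpace ↥(CC X) :=
  generateFrom {S | ∃ V : Set X, IsClopen V ∧ (S = ccBox V ∨ S = ccDia V)}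

/-- The order `⊴` on closed chains: `C₁ ⊴ C₂` iff `C₂ ⊆ C₁` and `C₂` is an upset in `C₁`. -/
def lec (C₁ C₂ : Set X) : Prop :=
  C₂ ⊆ C₁ ∧ ∀ x ∈ C₂, ∀ y ∈ C₁, x ≤ y → y ∈ C₂

section Aux

variable {X : Type*} [TopologicalSpace X] [Preorder X]

lemma ccBox_compl (V : Set X) : (ccBox V)ᶜ = (ccDia Vᶜ : Set ↥(CC X)) := by
  ext C
  simp only [ccBox, ccDia, mem_compl_iff, mem_setOf_eq, inter_compl_nonempty_iff]

lemma isOpen_ccBox {V : Set X} (hV : IsClopen V) : IsOpen (ccBox V : Set ↥(CC X)) :=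
  isOpen_generateFrom_of_mem ⟨V, hV, Or.inl rfl⟩

lemma isOpen_ccDia {V : Set X} (hV : IsClopen V) : IsOpen (ccDia V : Set ↥(CC X)) :=
  isOpen_generateFrom_of_mem ⟨V, hV, Or.inr rfl⟩

lemma isClosed_ccBox {V : Set X} (hV : IsClopen V) : IsClosed (ccBox V : Set ↥(CC X)) := by
  rw [← isOpen_compl_iff, ccBox_compl]
  exact isOpen_ccDia hV.compl

end Aux

section Priestley

variable {X : Type*} [TopologicalSpace X] [PartialOrder X] [CompactSpace X] [PriestleySpace X]

/-- In a Priestley space, a point outside a closed set can be separated from it by a clopen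
set containing the closed set. -/
lemma exists_isClopen_superset {C : Set X} (hC : IsClosed C) {d : X} (hd : d ∉ C) :
    ∃ V : Set X, IsClopen V ∧ C ⊆ V ∧ d ∉ V := by
  have h : ∀ c : C, ∃ W : Set X, IsClopen W ∧ (c : X) ∈ W ∧ d ∉ W := by
    rintro ⟨c, hc⟩
    have hne : c ≠ d := fun h => hd (h ▸ hc)
    obtain ⟨U, hU, -, hcU, hdU⟩ := exists_isClopen_upper_or_lower_of_ne hne
    exact ⟨U, hU, hcU, hdU⟩
  choose W hW hWc hWd using h
  obtain ⟨t, ht⟩ := hC.isCompact.elim_finite_subcover W (fun i => (hW i).isOpen)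
    (fun x hx => mem_iUnion.2 ⟨⟨x, hx⟩, hWc ⟨x, hx⟩⟩)
  refine ⟨⋃ i ∈ t, W i, isClopen_biUnion_finset fun i _ => hW i, ht, ?_⟩
  intro hmem
  obtain ⟨i, -, hdi⟩ := mem_iUnion₂.1 hmem
  exact hWd i hdi

/-- The Vietoris space of nonempty closed chains of a Priestley space is compact. -/
instance ccCompactSpace : CompactSpace ↥(CC X) := by
  constructor
  rw [isCompact_iff_ultrafilter_le_nhds]
  intro F _
  set C : Set X := {x | ∀ V : Set X, IsClopen V → x ∈ V → ccDia V ∈ F} with hCdef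
  -- C is closed
  have hclosed : IsClosed C := by
    rw [← isOpen_compl_iff]
    refine isOpen_iff_forall_mem_open.2 fun x hx => ?_
    have hx' : ¬ ∀ V : Set X, IsClopen V → x ∈ V → ccDia V ∈ F := hx
    push_neg at hx'
    obtain ⟨W, hW, hxW, hWF⟩ := hx'
    exact ⟨W, fun y hy hyC => hWF (hyC W hW hy), hW.isOpen, hxW⟩
  -- C is nonempty
  have hne : C.Nonempty := by
    by_contra hCne
    rw [not_nonempty_iff_eq_empty] at hCne
    have h : ∀ x : X, ∃ W : Set X, IsClopen W ∧ x ∈ W ∧ ccDia W ∉ F := by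
      intro x
      have hxC : x ∉ C := hCne ▸ notMem_empty x
      have hx' : ¬ ∀ V : Set X, IsClopen V → x ∈ V → ccDia V ∈ F := hxC
      push_neg at hx'
      exact hx'
    choose W hW hWx hWF using h
    obtain ⟨t, ht⟩ := isCompact_univ.elim_finite_subcover W (fun i => (hW i).isOpen)
      (fun x _ => mem_iUnion.2 ⟨x, hWx x⟩)
    have hmemF : (⋂ i ∈ t, (ccDia (W i))ᶜ : Set ↥(CC X)) ∈ F :=
      (Filter.biInter_mem t.finite_toSet).2 fun i _ =>
        (Ultrafilter.compl_mem_iff_notMem).2 (hWF i)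
    obtain ⟨K, hK⟩ := Ultrafilter.nonempty_of_mem hmemF
    obtain ⟨k, hkK⟩ := K.2.1
    obtain ⟨i, hit, hki⟩ := mem_iUnion₂.1 (ht (mem_univ k))
    exact (mem_iInter₂.1 hK i hit) ⟨k, hkK, hki⟩
  -- C is a chain
  have hchain : IsChain (· ≤ ·) C := by
    intro x hx y hy hxy
    by_contra hcon
    push_neg at hcon
    obtain ⟨hnxy, hnyx⟩ := hcon
    obtain ⟨U₁, hU₁, hUp₁, hxU₁, hyU₁⟩ := exists_isClopen_upper_of_not_le hnxy
    obtain ⟨U₂, hU₂, hUp₂, hyU₂, hxU₂⟩ := exists_isClopen_upper_of_not_le hnyx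
    have hA : ccDia (U₁ \ U₂) ∈ F := hx _ (hU₁.diff hU₂) ⟨hxU₁, hxU₂⟩
    have hB : ccDia (U₂ \ U₁) ∈ F := hy _ (hU₂.diff hU₁) ⟨hyU₂, hyU₁⟩
    obtain ⟨K, hKA, hKB⟩ := Ultrafilter.nonempty_of_mem (Filter.inter_mem hA hB)
    obtain ⟨a, haK, haU₁, haU₂⟩ := hKA
    obtain ⟨b, hbK, hbU₂, hbU₁⟩ := hKB
    have hab : a ≠ b := fun h => hbU₁ (h ▸ haU₁)
    rcases K.2.2.2 haK hbK hab with h | h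
    · exact hbU₁ (hUp₁ h haU₁)
    · exact haU₂ (hUp₂ h hbU₂)
  refine ⟨⟨C, hne, hclosed, hchain⟩, mem_univ _, ?_⟩
  show ↑F ≤ @nhds _
    (generateFrom {S | ∃ V : Set X, IsClopen V ∧ (S = ccBox V ∨ S = ccDia V)})
    ⟨C, hne, hclosed, hchain⟩
  rw [nhds_generateFrom]
  refine le_iInf fun s => le_iInf fun hs => Filter.le_principal_iff.2 ?_
  obtain ⟨hmem, V, hV, rfl | rfl⟩ := hs
  · -- box case
    have hCV : C ⊆ V := hmem
    by_contra hbox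
    have hdia : ccDia Vᶜ ∈ F := by
      rw [← ccBox_compl]
      exact (Ultrafilter.compl_mem_iff_notMem).2 hbox
    have h : ∀ x : ↥(Vᶜ), ∃ W : Set X, IsClopen W ∧ (x : X) ∈ W ∧ ccDia W ∉ F := by
      rintro ⟨x, hx⟩
      have hxC : x ∉ C := fun h => hx (hCV h)
      have hx' : ¬ ∀ V : Set X, IsClopen V → x ∈ V → ccDia V ∈ F := hxC
      push_neg at hx'
      exact hx'
    choose W hW hWx hWF using h
    obtain ⟨t, ht⟩ := (hV.compl.isClosed.isCompact).elim_finite_subcover W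
      (fun i => (hW i).isOpen) (fun x hx => mem_iUnion.2 ⟨⟨x, hx⟩, hWx ⟨x, hx⟩⟩)
    have hmemF : (ccDia Vᶜ ∩ ⋂ i ∈ t, (ccDia (W i))ᶜ : Set ↥(CC X)) ∈ F :=
      Filter.inter_mem hdia ((Filter.biInter_mem t.finite_toSet).2 fun i _ =>
        (Ultrafilter.compl_mem_iff_notMem).2 (hWF i))
    obtain ⟨K, hKdia, hKbox⟩ := Ultrafilter.nonempty_of_mem hmemF
    obtain ⟨k, hkK, hkV⟩ := hKdia
    obtain ⟨i, hit, hki⟩ := mem_iUnion₂.1 (ht hkV)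
    exact (mem_iInter₂.1 hKbox i hit) ⟨k, hkK, hki⟩
  · -- diamond case
    obtain ⟨x, hxC, hxV⟩ := hmem
    exact hxC V hV hxV

/-- Core of the hard direction: each member of a clopen upset has a clopen box
neighbourhood inside the upset. -/
lemma exists_ccBox_subset {𝒰 : Set ↥(CC X)} (hO : IsOpen 𝒰)
    (hup : ∀ C ∈ 𝒰, ∀ K : ↥(CC X), (K : Set X) ⊆ (C : Set X) → K ∈ 𝒰)
    {C : ↥(CC X)} (hC : C ∈ 𝒰) :
    ∃ V : Set X, IsClopen V ∧ (C : Set X) ⊆ V ∧ ccBox V ⊆ 𝒰 := by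
  by_contra hcon
  push_neg at hcon
  set ι := {V : Set X // IsClopen V ∧ (C : Set X) ⊆ V} with hι
  have : Nonempty ι := ⟨⟨univ, isClopen_univ, subset_univ _⟩⟩
  set Z : ι → Set ↥(CC X) := fun i => ccBox i.1 ∩ 𝒰ᶜ with hZ
  have hZne : ∀ i : ι, (Z i).Nonempty := by
    rintro ⟨V, hV, hCV⟩
    obtain ⟨K, hK1, hK2⟩ := not_subset.1 (hcon V hV hCV)
    exact ⟨K, hK1, hK2⟩
  have hZcl : ∀ i : ι, IsClosed (Z i) := fun i =>
    (isClosed_ccBox i.2.1).inter hO.isClosed_compl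
  have hZdir : Directed (· ⊇ ·) Z := by
    rintro ⟨V₁, hV₁, hCV₁⟩ ⟨V₂, hV₂, hCV₂⟩
    refine ⟨⟨V₁ ∩ V₂, hV₁.inter hV₂, subset_inter hCV₁ hCV₂⟩, ?_, ?_⟩
    · rintro K ⟨hK1, hK2⟩
      exact ⟨fun x hx => (hK1 hx).1, hK2⟩
    · rintro K ⟨hK1, hK2⟩
      exact ⟨fun x hx => (hK1 hx).2, hK2⟩
  obtain ⟨D, hD⟩ := IsCompact.nonempty_iInter_of_directed_nonempty_isCompact_isClosed
    Z hZdir hZne (fun i => (hZcl i).isCompact) hZcl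
  have hDC : (D : Set X) ⊆ (C : Set X) := by
    intro d hd
    by_contra hdC
    obtain ⟨V, hV, hCV, hdV⟩ := exists_isClopen_superset C.2.2.1 hdC
    have := mem_iInter.1 hD ⟨V, hV, hCV⟩
    exact hdV (this.1 hd)
  have hDU : D ∈ 𝒰 := hup C hC D hDC
  have := mem_iInter.1 hD ⟨univ, isClopen_univ, subset_univ _⟩
  exact this.2 hDU

end Priestley

/-- A subset of `CC(X)` is clopen and an upset for reverse inclusion iff it is a finite
union `□V₁ ∪ ⋯ ∪ □Vₙ` with the `Vᵢ` clopen in `X`. -/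
theorem stmt19 (X : Type*) [TopologicalSpace X] [PartialOrder X] [CompactSpace X]
    [PriestleySpace X] (𝒰 : Set ↥(CC X)) :
    (IsClopen 𝒰 ∧ ∀ C ∈ 𝒰, ∀ K : ↥(CC X), (K : Set X) ⊆ (C : Set X) → K ∈ 𝒰) ↔
    (∃ 𝒮 : Finset (Set X), (∀ V ∈ 𝒮, IsClopen V) ∧ 𝒰 = ⋃ V ∈ 𝒮, ccBox V) := by
  classical
  constructor
  · rintro ⟨hclopen, hup⟩
    choose V hVclopen hVsub hVbox using
      fun i : ↥𝒰 => exists_ccBox_subset hclopen.isOpen hup i.2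
    obtain ⟨t, ht⟩ := (hclopen.isClosed.isCompact).elim_finite_subcover
      (fun i : ↥𝒰 => ccBox (V i)) (fun i => isOpen_ccBox (hVclopen i))
      (fun K hK => mem_iUnion.2 ⟨⟨K, hK⟩, hVsub ⟨K, hK⟩⟩)
    refine ⟨t.image V, ?_, ?_⟩
    · intro W hW
      obtain ⟨i, -, rfl⟩ := Finset.mem_image.1 hW
      exact hVclopen i
    · apply Set.Subset.antisymm
      · intro K hK
        obtain ⟨i, hit, hKi⟩ := mem_iUnion₂.1 (ht hK)
        exact mem_iUnion₂.2 ⟨V i, Finset.mem_image_of_mem V hit, hKi⟩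
      · intro K hK
        obtain ⟨W, hWmem, hKW⟩ := mem_iUnion₂.1 hK
        obtain ⟨i, -, rfl⟩ := Finset.mem_image.1 hWmem
        exact hVbox i hKW
  · rintro ⟨𝒮, hS, rfl⟩
    constructor
    · exact isClopen_biUnion_finset fun W hW =>
        ⟨isClosed_ccBox (hS W hW), isOpen_ccBox (hS W hW)⟩
    · intro C hC K hK
      obtain ⟨W, hWmem, hCW⟩ := mem_iUnion₂.1 hC
      exact mem_iUnion₂.2 ⟨W, hWmem, hK.trans hCW⟩
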